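/- arXiv:2308.04011 — 2 statements merged into one kernel-verified Lean document; each statement's English description precedes it below -/
import Mathlib

section
/- Under the assumptions of Lemma 1 with squared loss, ε_PEHE/4 ≤ ε_CF − σ_Y ≤ ε_F^η + B_Φ · IPM_G(p_Φ(r)p(t,z), q_{Φ,η}(r|t,z)p(t,z)) − σ_Y. -/
/-!
Bias–variance: at each `(r, t)` the expected squared loss of `h` exceeds that of the conditional
mean `m` by exactly `(h - m)²`, so `ε_CF − σ_Y` is the `p(r)p(t)`-average of `(h - m)²`, and
`(a - b)² ≤ 2a² + 2b²` integrated against `p(t)p(t')` bounds `ε_PEHE` by four times it.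
For the second bound, `ε_CF − ε_F^η` is `B` times the integral of the loss `ℓ / B ∈ G` against
the difference of the two densities, which the IPM dominates.

No measurability is assumed, so `ε_CF − σ_Y` is controlled through integrable majorants
(`UpperIntegralLE`) rather than as the integral of a difference.
-/

open MeasureTheory

/-- The integral probability metric over a function class `G`, between densities `p` and `q`
with respect to a base measure `μ`. -/
noncomputable def IPM {X : Type*} [MeasurableSpace X] (μ : Measure X)
    (G : Set (X → ℝ)) (p q : X → ℝ) : ℝ :=
  sSup {r : ℝ | ∃ g ∈ G, r = |∫ x, g x * (p x - q x) ∂μ|}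

section BiasVariance

variable {μ : Measure ℝ} {p : ℝ → ℝ}

theorem integrable_mul_of_integrable_sq_mul (hp : ∀ y, 0 ≤ p y) (hp_int : Integrable p μ)
    (hp_sq : Integrable (fun y => y ^ 2 * p y) μ) : Integrable (fun y => y * p y) μ := by
  refine (hp_sq.add hp_int).mono' (aestronglyMeasurable_id.mul hp_int.aestronglyMeasurable)
    (Filter.Eventually.of_forall fun y => ?_)
  have habs : |y| ≤ y ^ 2 + 1 := by nlinarith [sq_abs y, abs_nonneg y]
  show ‖y * p y‖ ≤ y ^ 2 * p y + p y
  rw [Real.norm_eq_abs, abs_mul, abs_of_nonneg (hp y)]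
  nlinarith [hp y]

theorem integral_sq_sub_mul_sub_integral_sq_sub_mul (hp : ∀ y, 0 ≤ p y)
    (hp1 : ∫ y, p y ∂μ = 1) (hp_sq : Integrable (fun y => y ^ 2 * p y) μ) (c : ℝ) :
    (∫ y, (y - c) ^ 2 * p y ∂μ) - ∫ y, ((∫ y, y * p y ∂μ) - y) ^ 2 * p y ∂μ
      = (c - ∫ y, y * p y ∂μ) ^ 2 := by
  have hp_int : Integrable p μ := .of_integral_ne_zero (by rw [hp1]; exact one_ne_zero)
  have hp_mul := integrable_mul_of_integrable_sq_mul hp hp_int hp_sq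
  have expand : ∀ a : ℝ, ∫ y, (y - a) ^ 2 * p y ∂μ
      = (∫ y, y ^ 2 * p y ∂μ) - 2 * a * (∫ y, y * p y ∂μ) + a ^ 2 := fun a => by
    have heq : (fun y => (y - a) ^ 2 * p y)
        = fun y => (y ^ 2 * p y - 2 * a * (y * p y)) + a ^ 2 * p y := by
      funext y; ring
    rw [heq, integral_add (f := fun y => y ^ 2 * p y - 2 * a * (y * p y))
        (hp_sq.sub (hp_mul.const_mul _)) (hp_int.const_mul _),
      integral_sub (f := fun y => y ^ 2 * p y) hp_sq (hp_mul.const_mul _), integral_const_mul,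
      integral_const_mul, hp1]
    ring
  simp_rw [← neg_sub _ (∫ y, y * p y ∂μ), neg_sq, expand]
  ring

end BiasVariance

section UpperIntegral

variable {α : Type*} [MeasurableSpace α] {μ : Measure α} {g g' : α → ℝ} {v v' : ℝ}

/-- Unlike `∫ g ∂μ ≤ v`, this stays meaningful when `g` is not integrable and `∫ g ∂μ = 0` is
a junk value. -/
def UpperIntegralLE (μ : Measure α) (g : α → ℝ) (v : ℝ) : Prop :=
  ∃ u, Integrable u μ ∧ g ≤ᵐ[μ] u ∧ ∫ x, u x ∂μ ≤ v

theorem upperIntegralLE_sub {a b : α → ℝ} (ha : Integrable a μ) (hb : 0 ≤ᵐ[μ] b) :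
    UpperIntegralLE μ (fun x => a x - b x) ((∫ x, a x ∂μ) - ∫ x, b x ∂μ) := by
  by_cases hb_int : Integrable b μ
  · exact ⟨_, ha.sub hb_int, .rfl, (integral_sub ha hb_int).le⟩
  · refine ⟨a, ha, hb.mono fun x hx => sub_le_self _ hx, ?_⟩
    rw [integral_undef hb_int, sub_zero]

theorem UpperIntegralLE.mono (h : UpperIntegralLE μ g v) (hg : g' ≤ᵐ[μ] g) (hv : v ≤ v') :
    UpperIntegralLE μ g' v' :=
  let ⟨u, hu, hgu, huv⟩ := h
  ⟨u, hu, hg.trans hgu, huv.trans hv⟩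

theorem UpperIntegralLE.add (h : UpperIntegralLE μ g v) (h' : UpperIntegralLE μ g' v') :
    UpperIntegralLE μ (fun x => g x + g' x) (v + v') :=
  let ⟨u, hu, hgu, huv⟩ := h
  let ⟨u', hu', hgu', huv'⟩ := h'
  ⟨fun x => u x + u' x, hu.add hu', hgu.add_le_add hgu',
    (integral_add hu hu').trans_le (add_le_add huv huv')⟩

theorem UpperIntegralLE.const_mul (h : UpperIntegralLE μ g v) {c : ℝ} (hc : 0 ≤ c) :
    UpperIntegralLE μ (fun x => c * g x) (c * v) :=
  let ⟨u, hu, hgu, huv⟩ := h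
  ⟨fun x => c * u x, hu.const_mul c, hgu.mono fun _ hx => mul_le_mul_of_nonneg_left hx hc,
    (integral_const_mul c u).trans_le (mul_le_mul_of_nonneg_left huv hc)⟩

theorem UpperIntegralLE.integral_le (h : UpperIntegralLE μ g v) (hg : 0 ≤ᵐ[μ] g) :
    ∫ x, g x ∂μ ≤ v :=
  let ⟨_, hu, hgu, huv⟩ := h
  (integral_mono_of_nonneg hg hu hgu).trans huv

end UpperIntegral

section PEHE

variable {R T : Type*} [MeasurableSpace R] {μ : Measure R} {h m : R → T → ℝ} {pr : R → ℝ}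
  {pt : T → ℝ}

theorem integral_sq_sub_sub_le (hpr : ∀ r, 0 ≤ pr r) (hpt : ∀ t, 0 ≤ pt t) {t t' : T}
    {v v' : ℝ} (ht : UpperIntegralLE μ (fun r => (h r t - m r t) ^ 2 * (pr r * pt t)) v)
    (ht' : UpperIntegralLE μ (fun r => (h r t' - m r t') ^ 2 * (pr r * pt t')) v') :
    ∫ r, ((h r t - h r t') - (m r t - m r t')) ^ 2 * pr r * pt t * pt t' ∂μ
      ≤ 2 * pt t' * v + 2 * pt t * v' := by
  have hmajorant := (ht.const_mul (c := 2 * pt t') (by linarith [hpt t'])).add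
    (ht'.const_mul (c := 2 * pt t) (by linarith [hpt t]))
  refine (hmajorant.mono (.of_forall fun r => ?_) le_rfl).integral_le (.of_forall fun r => ?_)
  · -- `2a² + 2b² - (a - b)² = (a + b)²`
    nlinarith [mul_nonneg (mul_nonneg (mul_nonneg (hpr r) (hpt t)) (hpt t'))
      (sq_nonneg ((h r t - m r t) + (h r t' - m r t')))]
  · have := hpr r; have := hpt t; have := hpt t'; positivity

variable [MeasurableSpace T] {ν : Measure T}

theorem integral_integral_integral_sq_sub_sub_le (hpr : ∀ r, 0 ≤ pr r) (hpt : ∀ t, 0 ≤ pt t)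
    (hpt1 : ∫ t, pt t ∂ν = 1) {v : T → ℝ} {V : ℝ}
    (hv : ∀ᵐ t ∂ν, UpperIntegralLE μ (fun r => (h r t - m r t) ^ 2 * (pr r * pt t)) (v t))
    (hV : UpperIntegralLE ν v V) :
    ∫ t, ∫ t', ∫ r, ((h r t - h r t') - (m r t - m r t')) ^ 2 * pr r * pt t * pt t' ∂μ ∂ν ∂ν
      ≤ 4 * V := by
  obtain ⟨w, hw, hvw, hwV⟩ := hV
  have hpt_int : Integrable pt ν := .of_integral_ne_zero (by rw [hpt1]; exact one_ne_zero)
  have hw_dom : ∀ᵐ t ∂ν,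
      UpperIntegralLE μ (fun r => (h r t - m r t) ^ 2 * (pr r * pt t)) (w t) := by
    filter_upwards [hv, hvw] with t ht hvt using ht.mono .rfl hvt
  have nonneg : ∀ t t',
      0 ≤ ∫ r, ((h r t - h r t') - (m r t - m r t')) ^ 2 * pr r * pt t * pt t' ∂μ :=
    fun t t' => integral_nonneg fun r => by
      have := hpr r; have := hpt t; have := hpt t'; positivity
  have inner : ∀ᵐ t ∂ν, ∫ t', ∫ r, ((h r t - h r t') - (m r t - m r t')) ^ 2
      * pr r * pt t * pt t' ∂μ ∂ν ≤ 2 * w t + 2 * pt t * ∫ t', w t' ∂ν := by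
    filter_upwards [hw_dom] with t ht
    calc _ ≤ ∫ t', (2 * pt t' * w t + 2 * pt t * w t') ∂ν :=
          integral_mono_of_nonneg (.of_forall (nonneg t))
            (((hpt_int.const_mul 2).mul_const _).add (hw.const_mul _))
            (hw_dom.mono fun t' ht' => integral_sq_sub_sub_le hpr hpt ht ht')
      _ = 2 * w t + 2 * pt t * ∫ t', w t' ∂ν := by
          rw [integral_add ((hpt_int.const_mul 2).mul_const _) (hw.const_mul _),
            integral_mul_const, integral_const_mul, integral_const_mul, hpt1, mul_one]
  calc _ ≤ ∫ t, (2 * w t + 2 * pt t * ∫ t', w t' ∂ν) ∂ν :=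
        integral_mono_of_nonneg (.of_forall fun t => integral_nonneg (nonneg t))
          ((hw.const_mul 2).add ((hpt_int.const_mul 2).mul_const _)) inner
    _ = 4 * ∫ t, w t ∂ν := by
        rw [integral_add (hw.const_mul 2) ((hpt_int.const_mul 2).mul_const _),
          integral_const_mul, integral_mul_const, integral_const_mul, hpt1]
        ring
    _ ≤ 4 * V := by linarith

end PEHE

section IPM

variable {X : Type*} [MeasurableSpace X] {μ : Measure X} {G : Set (X → ℝ)} {g p q : X → ℝ}

theorem abs_integral_mul_sub_le_IPM
    (hG : BddAbove {r : ℝ | ∃ g ∈ G, r = |∫ x, g x * (p x - q x) ∂μ|}) (hg : g ∈ G) :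
    |∫ x, g x * (p x - q x) ∂μ| ≤ IPM μ G p q :=
  le_csSup hG ⟨g, hg, rfl⟩

theorem integral_mul_sub_integral_mul_le_mul_IPM {B : ℝ} (hB : 0 < B)
    (hg : (fun x => g x / B) ∈ G) (hp : Integrable (fun x => g x * p x) μ)
    (hq : Integrable (fun x => g x * q x) μ)
    (hG : BddAbove {r : ℝ | ∃ g ∈ G, r = |∫ x, g x * (p x - q x) ∂μ|}) :
    (∫ x, g x * p x ∂μ) - ∫ x, g x * q x ∂μ ≤ B * IPM μ G p q := by
  have hscale : (∫ x, g x * p x ∂μ) - ∫ x, g x * q x ∂μ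
      = B * ∫ x, g x / B * (p x - q x) ∂μ := by
    rw [← integral_sub hp hq, ← integral_const_mul]
    congr 1 with x
    field_simp
  rw [hscale]
  exact mul_le_mul_of_nonneg_left ((le_abs_self _).trans (abs_integral_mul_sub_le_IPM hG hg))
    hB.le

end IPM

theorem generalization_bound_ITE_general
    {R T : Type*} [MeasurableSpace R] [MeasurableSpace T]
    (μ : Measure R) (ν : Measure T) [SigmaFinite μ] [SigmaFinite ν]
    (G : Set (R × T → ℝ))
    (py : ℝ → R → T → ℝ) (pr : R → ℝ) (pt : T → ℝ) (q : R → T → ℝ)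
    (h m : R → T → ℝ) (B : ℝ) (hB : 0 < B)
    (hpy : ∀ y r t, 0 ≤ py y r t)
    (hpr : ∀ r, 0 ≤ pr r) (hpt : ∀ t, 0 ≤ pt t)
    (hpt1 : ∫ t, pt t ∂ν = 1)
    (hnorm : ∀ r t, ∫ y, py y r t = 1)
    (hm : ∀ r t, m r t = ∫ y, y * py y r t)
    (hIntY : ∀ r t, Integrable (fun y : ℝ => y ^ 2 * py y r t))
    (hG : (fun z : R × T => (∫ y, (y - h z.1 z.2) ^ 2 * py y z.1 z.2) / B) ∈ G)
    (hIntCF : Integrable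
      (fun z : R × T => (∫ y, (y - h z.1 z.2) ^ 2 * py y z.1 z.2) * (pr z.1 * pt z.2))
      (μ.prod ν))
    (hIntF : Integrable
      (fun z : R × T => (∫ y, (y - h z.1 z.2) ^ 2 * py y z.1 z.2) * (q z.1 z.2 * pt z.2))
      (μ.prod ν))
    (hBdd : BddAbove {x : ℝ | ∃ g ∈ G,
      x = |∫ z, g z * ((fun z : R × T => pr z.1 * pt z.2) z
            - (fun z : R × T => q z.1 z.2 * pt z.2) z) ∂(μ.prod ν)|}) :
    (∫ t, ∫ t', ∫ r,
        ((h r t - h r t') - (m r t - m r t')) ^ 2 * pr r * pt t * pt t' ∂μ ∂ν ∂ν) / 4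
      ≤ (∫ t, ∫ r, (∫ y, (y - h r t) ^ 2 * py y r t) * (pr r * pt t) ∂μ ∂ν)
          - (∫ t, ∫ r, (∫ y, (m r t - y) ^ 2 * py y r t) * (pr r * pt t) ∂μ ∂ν)
    ∧ (∫ t, ∫ r, (∫ y, (y - h r t) ^ 2 * py y r t) * (pr r * pt t) ∂μ ∂ν)
          - (∫ t, ∫ r, (∫ y, (m r t - y) ^ 2 * py y r t) * (pr r * pt t) ∂μ ∂ν)
      ≤ (∫ t, ∫ r, (∫ y, (y - h r t) ^ 2 * py y r t) * (q r t * pt t) ∂μ ∂ν)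
          + B * IPM (μ.prod ν) G (fun z => pr z.1 * pt z.2) (fun z => q z.1 z.2 * pt z.2)
          - (∫ t, ∫ r, (∫ y, (m r t - y) ^ 2 * py y r t) * (pr r * pt t) ∂μ ∂ν) := by
  have hbias : ∀ r t, (∫ y, (y - h r t) ^ 2 * py y r t) - ∫ y, (m r t - y) ^ 2 * py y r t
      = (h r t - m r t) ^ 2 := fun r t => by
    rw [hm r t]
    exact integral_sq_sub_mul_sub_integral_sq_sub_mul (hpy · r t) (hnorm r t) (hIntY r t) _
  have hσX_nonneg : ∀ r t, 0 ≤ (∫ y, (m r t - y) ^ 2 * py y r t) * (pr r * pt t) :=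
    fun r t => mul_nonneg (integral_nonneg fun y => mul_nonneg (sq_nonneg _) (hpy y r t))
      (mul_nonneg (hpr r) (hpt t))
  constructor
  · refine (div_le_iff₀' (by norm_num)).2 (integral_integral_integral_sq_sub_sub_le hpr hpt hpt1
      ?_ (upperIntegralLE_sub hIntCF.integral_prod_right (.of_forall fun t =>
        integral_nonneg fun r => hσX_nonneg r t)))
    filter_upwards [hIntCF.prod_left_ae] with t ht
    exact (upperIntegralLE_sub ht (.of_forall fun r => hσX_nonneg r t)).mono
      (.of_forall fun r => by dsimp only; rw [← sub_mul, hbias]) le_rfl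
  · have hCF_le := integral_mul_sub_integral_mul_le_mul_IPM hB hG hIntCF hIntF hBdd
    rw [integral_prod_symm _ hIntCF, integral_prod_symm _ hIntF] at hCF_le
    linarith

/-- Theorem 1 (generalization bound for ITE estimation in network data):
ε_PEHE/4 ≤ ε_CF − σ_Y ≤ ε_F^η + B_Φ · IPM_G(p_Φ(r)p(t,z), q_{Φ,η}(r|t,z)p(t,z)) − σ_Y.
Here `R` is the representation space, `T` the space of treatment pairs `(t,z)`,
`pr` the (pushforward) feature density, `pt` the treatment-pair density,
`q` the reweighted conditional density, `py` the outcome conditional density,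
`h` the hypothesis and `m` the conditional mean outcome. -/
theorem generalization_bound_ITE
    {R T : Type*} [MeasurableSpace R] [MeasurableSpace T]
    (μ : Measure R) (ν : Measure T) [SigmaFinite μ] [SigmaFinite ν]
    (G : Set (R × T → ℝ))
    (py : ℝ → R → T → ℝ) (pr : R → ℝ) (pt : T → ℝ) (q : R → T → ℝ)
    (h m : R → T → ℝ) (B : ℝ) (hB : 0 < B)
    (hpy : ∀ y r t, 0 ≤ py y r t)
    (hpr : ∀ r, 0 ≤ pr r) (hpt : ∀ t, 0 ≤ pt t) (hq : ∀ r t, 0 ≤ q r t)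
    (hpr1 : ∫ r, pr r ∂μ = 1) (hpt1 : ∫ t, pt t ∂ν = 1)
    (hq1 : ∀ t, ∫ r, q r t ∂μ = 1)
    (hnorm : ∀ r t, ∫ y, py y r t = 1)
    (hm : ∀ r t, m r t = ∫ y, y * py y r t)
    (hIntY : ∀ r t, Integrable (fun y : ℝ => y ^ 2 * py y r t))
    (hG : (fun z : R × T => (∫ y, (y - h z.1 z.2) ^ 2 * py y z.1 z.2) / B) ∈ G)
    (hIntCF : Integrable
      (fun z : R × T => (∫ y, (y - h z.1 z.2) ^ 2 * py y z.1 z.2) * (pr z.1 * pt z.2))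
      (μ.prod ν))
    (hIntF : Integrable
      (fun z : R × T => (∫ y, (y - h z.1 z.2) ^ 2 * py y z.1 z.2) * (q z.1 z.2 * pt z.2))
      (μ.prod ν))
    (hBdd : BddAbove {x : ℝ | ∃ g ∈ G,
      x = |∫ z, g z * ((fun z : R × T => pr z.1 * pt z.2) z
            - (fun z : R × T => q z.1 z.2 * pt z.2) z) ∂(μ.prod ν)|}) :
    (∫ t, ∫ t', ∫ r,
        ((h r t - h r t') - (m r t - m r t')) ^ 2 * pr r * pt t * pt t' ∂μ ∂ν ∂ν) / 4
      ≤ (∫ t, ∫ r, (∫ y, (y - h r t) ^ 2 * py y r t) * (pr r * pt t) ∂μ ∂ν)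
          - (∫ t, ∫ r, (∫ y, (m r t - y) ^ 2 * py y r t) * (pr r * pt t) ∂μ ∂ν)
    ∧ (∫ t, ∫ r, (∫ y, (y - h r t) ^ 2 * py y r t) * (pr r * pt t) ∂μ ∂ν)
          - (∫ t, ∫ r, (∫ y, (m r t - y) ^ 2 * py y r t) * (pr r * pt t) ∂μ ∂ν)
      ≤ (∫ t, ∫ r, (∫ y, (y - h r t) ^ 2 * py y r t) * (q r t * pt t) ∂μ ∂ν)
          + B * IPM (μ.prod ν) G (fun z => pr z.1 * pt z.2) (fun z => q z.1 z.2 * pt z.2)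
          - (∫ t, ∫ r, (∫ y, (m r t - y) ^ 2 * py y r t) * (pr r * pt t) ∂μ ∂ν) :=
  generalization_bound_ITE_general μ ν G py pr pt q h m B hB hpy hpr hpt hpt1 hnorm hm hIntY hG
    hIntCF hIntF hBdd
end

section
/- Under the bounded odds-ratio assumption 1/Γ_t ≤ e_η(t;x_t)/e(t;x_t) ≤ Γ_t and 1/Γ_z ≤ φ_η(z;x_z)/φ(z;x_z) ≤ Γ_z with Γ_t, Γ_z ≥ 1, the KL divergence between the product distribution p(x)p(t,z) and the reweighted joint distribution q_η(x|t,z)p(t,z), where q_η(x|t,z) = (1/Z)·p(x)·e(t;x_t)φ(z;x_z)/(e_η(t;x_t)φ_η(z;x_z)), satisfies D_KL(p(x)p(t,z) ∥ q_η(x|t,z)p(t,z)) ≤ 2(log Γ_t + log Γ_z). -/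
open MeasureTheory Real

/-!
Write `w = (e_η/e)(φ_η/φ)`, so that `q = p / (Z w)` with `Z = ∫ p w`. The odds-ratio bounds give
`0 < w ≤ Γ_t Γ_z`, hence also `Z ≤ Γ_t Γ_z`, and wherever `p > 0` the log-likelihood ratio
`log (p / q) = log Z + log w` is at most `2 log (Γ_t Γ_z)`. Integrating this pointwise bound against
the probability density `p(x) p(t,z)` gives the claim.
-/

theorem integral_le_of_le_mul_density {α : Type*} [MeasurableSpace α] {μ : Measure α}
    {p f : α → ℝ} {c : ℝ} (hp1 : ∫ x, p x ∂μ = 1) (hc : 0 ≤ c) (hf : ∀ x, f x ≤ p x * c) :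
    ∫ x, f x ∂μ ≤ c := by
  by_cases hfi : Integrable f μ
  · have hpi : Integrable p μ := .of_integral_ne_zero (by rw [hp1]; exact one_ne_zero)
    calc ∫ x, f x ∂μ ≤ ∫ x, p x * c ∂μ := integral_mono hfi (hpi.mul_const c) hf
      _ = c := by rw [integral_mul_const, hp1, one_mul]
  · rwa [integral_undef hfi]

theorem log_div_reweight_le {a Z w B : ℝ} (ha : a ≠ 0) (hZ : 0 ≤ Z) (hZB : Z ≤ B)
    (hw : 0 < w) (hwB : w ≤ B) (hB : 1 ≤ B) :
    log (a / (1 / Z * a * w⁻¹)) ≤ 2 * log B := by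
  rcases hZ.eq_or_lt with rfl | hZ
  · simpa using log_nonneg hB
  have hratio : a / (1 / Z * a * w⁻¹) = Z * w := by field_simp
  calc log (a / (1 / Z * a * w⁻¹)) = log Z + log w := by
        rw [hratio, log_mul hZ.ne' hw.ne']
    _ ≤ log B + log B := add_le_add (log_le_log hZ hZB) (log_le_log hw hwB)
    _ = 2 * log B := by ring

theorem integral_mul_log_div_reweight_le {α : Type*} [MeasurableSpace α] {μ : Measure α}
    {p w : α → ℝ} {Z B : ℝ} (hp : ∀ x, 0 ≤ p x) (hp1 : ∫ x, p x ∂μ = 1)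
    (hw : ∀ x, 0 < w x) (hwB : ∀ x, w x ≤ B) (hB : 1 ≤ B) (hZ : Z = ∫ x, p x * w x ∂μ) :
    ∫ x, p x * log (p x / (1 / Z * p x * (w x)⁻¹)) ∂μ ≤ 2 * log B := by
  have hB0 : 0 ≤ B := zero_le_one.trans hB
  have hZ0 : 0 ≤ Z := hZ ▸ integral_nonneg fun x => mul_nonneg (hp x) (hw x).le
  have hZB : Z ≤ B :=
    hZ ▸ integral_le_of_le_mul_density hp1 hB0 fun x => mul_le_mul_of_nonneg_left (hwB x) (hp x)
  refine integral_le_of_le_mul_density hp1 (mul_nonneg zero_le_two (log_nonneg hB)) fun x => ?_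
  rcases (hp x).eq_or_lt with hpx | hpx
  · simp [← hpx]
  · exact mul_le_mul_of_nonneg_left
      (log_div_reweight_le hpx.ne' hZ0 hZB (hw x) (hwB x) hB) hpx.le

theorem kl_bound_reweighted_general
    {X T : Type*} [MeasurableSpace X] [MeasurableSpace T]
    (μ : Measure X) (ν : Measure T)
    (p : X → ℝ) (pt : T → ℝ) (e φ eη φη : T → X → ℝ) (q : X → T → ℝ) (Z : T → ℝ)
    (Γt Γz : ℝ) (hΓt : 1 ≤ Γt) (hΓz : 1 ≤ Γz)
    (hp : ∀ x, 0 ≤ p x) (hp1 : ∫ x, p x ∂μ = 1)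
    (hpt : ∀ t, 0 ≤ pt t) (hpt1 : ∫ t, pt t ∂ν = 1)
    (hodds_t : ∀ t x, 1 / Γt ≤ eη t x / e t x ∧ eη t x / e t x ≤ Γt)
    (hodds_z : ∀ t x, 1 / Γz ≤ φη t x / φ t x ∧ φη t x / φ t x ≤ Γz)
    (hZ : ∀ t, Z t = ∫ x, p x * (eη t x * φη t x) / (e t x * φ t x) ∂μ)
    (hq : ∀ x t, q x t = (1 / Z t) * p x * (e t x * φ t x) / (eη t x * φη t x)) :
    (∫ t, ∫ x, p x * pt t * Real.log ((p x * pt t) / (q x t * pt t)) ∂μ ∂ν)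
      ≤ 2 * (Real.log Γt + Real.log Γz) := by
  have hΓ : 1 ≤ Γt * Γz := one_le_mul_of_one_le_of_one_le hΓt hΓz
  have hrt : ∀ t x, 0 < eη t x / e t x := fun t x =>
    (one_div_pos.2 (zero_lt_one.trans_le hΓt)).trans_le (hodds_t t x).1
  have hrz : ∀ t x, 0 < φη t x / φ t x := fun t x =>
    (one_div_pos.2 (zero_lt_one.trans_le hΓz)).trans_le (hodds_z t x).1
  have hq' : ∀ x t, q x t = 1 / Z t * p x * (eη t x / e t x * (φη t x / φ t x))⁻¹ := by
    intro x t
    rw [hq, mul_div_assoc, ← mul_div_mul_comm, inv_div]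
  have hcond : ∀ t, ∫ x, p x * log (p x / q x t) ∂μ ≤ 2 * log (Γt * Γz) := fun t => by
    simp_rw [hq']
    refine integral_mul_log_div_reweight_le hp hp1 (fun x => mul_pos (hrt t x) (hrz t x))
      (fun x => mul_le_mul (hodds_t t x).2 (hodds_z t x).2 (hrz t x).le (by linarith)) hΓ ?_
    rw [hZ]
    congr 1 with x
    rw [mul_div_assoc, mul_div_mul_comm]
  have hjoint : ∀ t, ∫ x, p x * pt t * log (p x * pt t / (q x t * pt t)) ∂μ
      = pt t * ∫ x, p x * log (p x / q x t) ∂μ := by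
    intro t
    rw [← integral_const_mul]
    congr 1 with x
    rcases eq_or_ne (pt t) 0 with h | h
    · simp [h]
    · rw [mul_div_mul_right _ _ h]; ring
  rw [← log_mul (by positivity) (by positivity)]
  refine integral_le_of_le_mul_density hpt1 (mul_nonneg zero_le_two (log_nonneg hΓ)) fun t => ?_
  rw [hjoint]
  exact mul_le_mul_of_nonneg_left (hcond t) (hpt t)

/-- KL bound under the bounded odds-ratio assumption:
D_KL(p(x)p(t,z) ∥ q_η(x|t,z)p(t,z)) ≤ 2(log Γ_t + log Γ_z), where
`q_η(x|t,z) = (1/Z(t,z))·p(x)·e(t;x)φ(z;x)/(e_η(t;x)φ_η(z;x))`. Here `T` denotes the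
space of treatment pairs `(t,z)`, and `e t x, φ t x, eη t x, φη t x` the true and
estimated individual/neighborhood propensity scores. -/
theorem kl_bound_reweighted
    {X T : Type*} [MeasurableSpace X] [MeasurableSpace T]
    (μ : Measure X) (ν : Measure T)
    (p : X → ℝ) (pt : T → ℝ) (e φ eη φη : T → X → ℝ) (q : X → T → ℝ) (Z : T → ℝ)
    (Γt Γz : ℝ) (hΓt : 1 ≤ Γt) (hΓz : 1 ≤ Γz)
    (hp : ∀ x, 0 ≤ p x) (hp1 : ∫ x, p x ∂μ = 1)
    (hpt : ∀ t, 0 ≤ pt t) (hpt1 : ∫ t, pt t ∂ν = 1)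
    (he : ∀ t x, 0 < e t x) (hφ : ∀ t x, 0 < φ t x)
    (heη : ∀ t x, 0 < eη t x) (hφη : ∀ t x, 0 < φη t x)
    (hodds_t : ∀ t x, 1 / Γt ≤ eη t x / e t x ∧ eη t x / e t x ≤ Γt)
    (hodds_z : ∀ t x, 1 / Γz ≤ φη t x / φ t x ∧ φη t x / φ t x ≤ Γz)
    (hZ : ∀ t, Z t = ∫ x, p x * (eη t x * φη t x) / (e t x * φ t x) ∂μ)
    (hq : ∀ x t, q x t = (1 / Z t) * p x * (e t x * φ t x) / (eη t x * φη t x)) :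
    (∫ t, ∫ x, p x * pt t * Real.log ((p x * pt t) / (q x t * pt t)) ∂μ ∂ν)
      ≤ 2 * (Real.log Γt + Real.log Γz) :=
  kl_bound_reweighted_general μ ν p pt e φ eη φη q Z Γt Γz hΓt hΓz hp hp1 hpt hpt1 hodds_t hodds_z
    hZ hq
end
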